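/- arXiv:1310.5589 — 6 statements merged into one kernel-verified Lean document; each statement's English description precedes it below -/
import Mathlib

section
/- Let S be a right fairly amenable semigroup with witnessing measure μ. If L_a and L_b are two L-classes contained in the same D-class of S, then μ(L_a) = μ(L_b). -/
open Set

/-- A finitely-additive probability measure on a type `S`. -/
def IsFAProb {S : Type*} (μ : Set S → ℝ) : Prop :=
  μ Set.univ = 1 ∧ (∀ A, 0 ≤ μ A) ∧
    ∀ A B : Set S, Disjoint A B → μ (A ∪ B) = μ A + μ B

/-- `μ` is left fairly invariant: `μ (s A) = μ A` whenever left
multiplication by `s` is injective on `A`. -/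
def LeftFairlyInv {S : Type*} [Mul S] (μ : Set S → ℝ) : Prop :=
  ∀ (s : S) (A : Set S), Set.InjOn (fun x => s * x) A →
    μ ((fun x => s * x) '' A) = μ A

/-- `μ` is right fairly invariant. -/
def RightFairlyInv {S : Type*} [Mul S] (μ : Set S → ℝ) : Prop :=
  ∀ (s : S) (A : Set S), Set.InjOn (fun x => x * s) A →
    μ ((fun x => x * s) '' A) = μ A

/-- Green's `L`-relation. -/
def LRel {S : Type*} [Mul S] (a b : S) : Prop :=
  (a = b ∨ ∃ s, s * a = b) ∧ (b = a ∨ ∃ s, s * b = a)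

/-- Green's `R`-relation. -/
def RRel {S : Type*} [Mul S] (a b : S) : Prop :=
  (a = b ∨ ∃ s, a * s = b) ∧ (b = a ∨ ∃ s, b * s = a)

/-- Green's `D`-relation. -/
def DRel {S : Type*} [Mul S] (a b : S) : Prop :=
  ∃ c, LRel a c ∧ RRel c b

lemma lrel_trans {S : Type*} [Semigroup S] {a b c : S} (h1 : LRel a b)
    (h2 : LRel b c) : LRel a c := by
  obtain ⟨h1a, h1b⟩ := h1
  obtain ⟨h2a, h2b⟩ := h2
  constructor
  · rcases h1a with rfl | ⟨s, rfl⟩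
    · exact h2a
    · rcases h2a with rfl | ⟨t, rfl⟩
      · exact Or.inr ⟨s, rfl⟩
      · exact Or.inr ⟨t * s, mul_assoc t s a⟩
  · rcases h2b with rfl | ⟨s, rfl⟩
    · exact h1b
    · rcases h1b with rfl | ⟨t, rfl⟩
      · exact Or.inr ⟨s, rfl⟩
      · exact Or.inr ⟨t * s, mul_assoc t s c⟩

lemma lrel_symm {S : Type*} [Mul S] {a b : S} (h : LRel a b) : LRel b a :=
  ⟨h.2, h.1⟩

/-- Green's Lemma step: if `c * s = b` and `b * s' = c`, then `μ (L_c) = μ (L_b)`. -/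
lemma green_step {S : Type*} [Semigroup S] (μ : Set S → ℝ)
    (hinv : RightFairlyInv μ) {c b s s' : S} (hs : c * s = b) (hs' : b * s' = c) :
    μ {x | LRel x c} = μ {x | LRel x b} := by
  have hret : ∀ x, LRel x c → x * s * s' = x := by
    rintro x ⟨-, hx2⟩
    rcases hx2 with rfl | ⟨t, rfl⟩
    · rw [hs, hs']
    · rw [mul_assoc, mul_assoc, ← mul_assoc c, hs, hs']
  have hret' : ∀ y, LRel y b → y * s' * s = y := by
    rintro y ⟨-, hy2⟩
    rcases hy2 with rfl | ⟨t, rfl⟩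
    · rw [hs', hs]
    · rw [mul_assoc, mul_assoc, ← mul_assoc b, hs', hs]
  have himg : (fun x => x * s) '' {x | LRel x c} = {y | LRel y b} := by
    ext y
    constructor
    · rintro ⟨x, ⟨hx1, hx2⟩, rfl⟩
      show LRel (x * s) b
      constructor
      · rcases hx1 with rfl | ⟨u, hu⟩
        · exact Or.inl hs
        · exact Or.inr ⟨u, by rw [← mul_assoc, hu, hs]⟩
      · rcases hx2 with rfl | ⟨t, rfl⟩
        · exact Or.inl hs.symm
        · exact Or.inr ⟨t, by rw [← hs, mul_assoc]⟩
    · intro hy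
      obtain ⟨hy1, hy2⟩ := hy
      have hyb : LRel y b := ⟨hy1, hy2⟩
      refine ⟨y * s', ?_, hret' y hyb⟩
      show LRel (y * s') c
      constructor
      · rcases hy1 with rfl | ⟨u, hu⟩
        · exact Or.inl hs'
        · exact Or.inr ⟨u, by rw [← mul_assoc, hu, hs']⟩
      · rcases hy2 with rfl | ⟨t, rfl⟩
        · exact Or.inl hs'.symm
        · exact Or.inr ⟨t, by rw [← hs', mul_assoc]⟩
  have hinj : Set.InjOn (fun x => x * s) {x | LRel x c} := by
    intro x hx x' hx' hxx
    have := congrArg (fun z => z * s') hxx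
    simpa [hret x hx, hret x' hx'] using this
  rw [← himg, hinv s _ hinj]

/-- For a right fairly invariant measure, `D`-related `L`-classes have equal
measure. -/
theorem stmt8 {S : Type*} [Semigroup S] (μ : Set S → ℝ)
    (hμ : IsFAProb μ) (hinv : RightFairlyInv μ)
    (a b : S) (h : DRel a b) :
    μ {x | LRel x a} = μ {x | LRel x b} := by
  obtain ⟨c, hac, hcb1, hcb2⟩ := h
  have hLa : {x | LRel x a} = {x | LRel x c} := by
    ext x
    exact ⟨fun hx => lrel_trans hx hac, fun hx => lrel_trans hx (lrel_symm hac)⟩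
  rw [hLa]
  rcases hcb1 with rfl | ⟨s, hs⟩
  · rfl
  · rcases hcb2 with rfl | ⟨s', hs'⟩
    · rfl
    · exact green_step μ hinv hs hs'
end

section
/- If S and T are semigroups each admitting a left fairly invariant finitely-additive probability measure, then the direct product semigroup S × T also admits a left fairly invariant finitely-additive probability measure. -/
open Set

/-!
The product measure of `A` is the integral over `s` of `ν (Prod.mk s ⁻¹' A)` against `μ`, taken as
a lower integral by step functions; it is finitely additive because the lower integral is, every
function with values in `[0, 1]` being within `2 / n` of a step function built from its level sets.

If `(x, y) * ·` is injective on `A`, the slice of the image at `s` is the disjoint union of the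
sets `y * A_a` over the fibre `x * a = s`, so its measure `h s` is the sum of `g a = ν A_a` over
that fibre. To compare the integrals of `h` and `g`, stack the values of `g` along each fibre in a
well-order and cut the stacks into cells of length `1 / n`. The points occupying the `j`-th cell
meet each fibre at most once, so fair invariance of `μ` transports their measure through `x * ·`.
This shows `∫ g ≤ ∫ h`; for the converse, the fibres meeting at least `k` nonempty slices lie over
a set of measure at most `1 / k`, which carries `k` disjoint translates of itself.
-/

open Finset Finsupp

namespace IsFAProb

variable {α : Type*} {μ : Set α → ℝ}

theorem nonneg (h : IsFAProb μ) (A : Set α) : 0 ≤ μ A := h.2.1 A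

theorem union (h : IsFAProb μ) {A B : Set α} (hAB : Disjoint A B) : μ (A ∪ B) = μ A + μ B :=
  h.2.2 A B hAB

theorem empty (h : IsFAProb μ) : μ ∅ = 0 := by
  have := h.union (disjoint_bot_left (a := (∅ : Set α)))
  rw [Set.union_empty] at this
  linarith

theorem inter_add_diff (h : IsFAProb μ) (A B : Set α) : μ (A ∩ B) + μ (A \ B) = μ A := by
  rw [← h.union (Set.disjoint_sdiff_inter.symm), Set.inter_union_sdiff]

theorem mono (h : IsFAProb μ) {A B : Set α} (hAB : A ⊆ B) : μ A ≤ μ B := by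
  rw [← h.inter_add_diff B A, Set.inter_eq_right.2 hAB]
  linarith [h.nonneg (B \ A)]

theorem le_one (h : IsFAProb μ) (A : Set α) : μ A ≤ 1 :=
  h.1 ▸ h.mono (Set.subset_univ A)

theorem biUnion_finset {ι : Type*} (h : IsFAProb μ) {s : Finset ι} {E : ι → Set α}
    (hE : (s : Set ι).PairwiseDisjoint E) : μ (⋃ i ∈ s, E i) = ∑ i ∈ s, μ (E i) := by
  classical
  induction s using Finset.induction with
  | empty => simpa using h.empty
  | insert a s ha ih =>
    rw [Finset.coe_insert] at hE
    have hdisj : Disjoint (E a) (⋃ i ∈ s, E i) :=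
      Set.disjoint_iUnion₂_right.2 fun i hi =>
        hE (Set.mem_insert a _) (Set.mem_insert_of_mem a hi) (ne_of_mem_of_not_mem hi ha).symm
    rw [Finset.set_biUnion_insert, Finset.sum_insert ha, h.union hdisj,
      ih (hE.subset (Set.subset_insert a _))]

theorem biUnion_finset_le {ι : Type*} (h : IsFAProb μ) (s : Finset ι) (E : ι → Set α) :
    μ (⋃ i ∈ s, E i) ≤ ∑ i ∈ s, μ (E i) := by
  classical
  induction s using Finset.induction with
  | empty => simp [h.empty]
  | insert a s ha ih =>
    rw [Finset.set_biUnion_insert, Finset.sum_insert ha, ← Set.union_sdiff_self,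
      h.union Set.disjoint_sdiff_right]
    linarith [h.mono (Set.sdiff_subset (s := ⋃ i ∈ s, E i) (t := E a))]

end IsFAProb

section StepFunctions

variable {α : Type*}

/-- Step functions are formal combinations of sets; `IsFAProb.stepIntegral_mono` shows that
their integral only depends on the function they represent. -/
noncomputable def stepFn : (Set α →₀ ℝ) →ₗ[ℝ] α → ℝ :=
  linearCombination ℝ fun E => E.indicator 1

noncomputable def stepIntegral (μ : Set α → ℝ) : (Set α →₀ ℝ) →ₗ[ℝ] ℝ :=
  linearCombination ℝ μ

theorem stepFn_apply (w : Set α →₀ ℝ) (x : α) :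
    stepFn w x = ∑ E ∈ w.support, w E * E.indicator 1 x := by
  simp [stepFn, linearCombination_apply, Finsupp.sum]

theorem stepIntegral_apply (μ : Set α → ℝ) (w : Set α →₀ ℝ) :
    stepIntegral μ w = ∑ E ∈ w.support, w E * μ E := by
  simp [stepIntegral, linearCombination_apply, Finsupp.sum]

@[simp]
theorem stepFn_single (E : Set α) (c : ℝ) : stepFn (single E c) = c • E.indicator 1 := by
  simp [stepFn]

@[simp]
theorem stepIntegral_single (μ : Set α → ℝ) (E : Set α) (c : ℝ) :
    stepIntegral μ (single E c) = c * μ E := by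
  simp [stepIntegral]

variable {μ : Set α → ℝ}

-- Splitting `V` along `E a` makes this an induction on the number of sets.
theorem IsFAProb.mul_le_sum_mul_inter {ι : Type*} (h : IsFAProb μ) (s : Finset ι)
    (c : ι → ℝ) (E : ι → Set α) (K : ℝ) (V : Set α)
    (hK : ∀ x ∈ V, K ≤ ∑ i ∈ s, c i * (E i).indicator 1 x) :
    K * μ V ≤ ∑ i ∈ s, c i * μ (E i ∩ V) := by
  classical
  induction s using Finset.induction generalizing K V with
  | empty =>
    rcases V.eq_empty_or_nonempty with rfl | ⟨x, hx⟩
    · simp [h.empty]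
    · simpa using mul_nonpos_of_nonpos_of_nonneg (by simpa using hK x hx) (h.nonneg V)
  | insert a s ha ih =>
    have hin := ih (K - c a) (V ∩ E a) fun x hx => by
      have := hK x hx.1
      rw [Finset.sum_insert ha, Set.indicator_of_mem hx.2] at this
      simp only [Pi.one_apply, mul_one] at this
      linarith
    have hout := ih K (V \ E a) fun x hx => by
      have := hK x hx.1
      rwa [Finset.sum_insert ha, Set.indicator_of_notMem hx.2, mul_zero, zero_add] at this
    have hsplit : ∀ i, μ (E i ∩ (V ∩ E a)) + μ (E i ∩ (V \ E a)) = μ (E i ∩ V) := fun i => by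
      rw [← Set.inter_assoc, ← Set.inter_sdiff_assoc, h.inter_add_diff]
    rw [Finset.sum_insert ha, Set.inter_comm, ← h.inter_add_diff V (E a)]
    have hsum : ∑ i ∈ s, c i * μ (E i ∩ V) = ∑ i ∈ s, c i * μ (E i ∩ (V ∩ E a))
        + ∑ i ∈ s, c i * μ (E i ∩ (V \ E a)) := by
      rw [← Finset.sum_add_distrib]
      exact Finset.sum_congr rfl fun i _ => by rw [← mul_add, hsplit]
    rw [hsum]
    linarith

theorem IsFAProb.stepIntegral_nonneg (h : IsFAProb μ) {w : Set α →₀ ℝ} (hw : 0 ≤ stepFn w) :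
    0 ≤ stepIntegral μ w := by
  have := h.mul_le_sum_mul_inter w.support w id 0 Set.univ fun x _ => by
    simpa [stepFn_apply] using hw x
  simpa [stepIntegral_apply] using this

theorem IsFAProb.stepIntegral_mono (h : IsFAProb μ) {w w' : Set α →₀ ℝ}
    (hw : stepFn w ≤ stepFn w') : stepIntegral μ w ≤ stepIntegral μ w' := by
  have := h.stepIntegral_nonneg (w := w' - w) (by simpa [map_sub] using hw)
  simpa [map_sub] using this

theorem IsFAProb.stepIntegral_le_add (h : IsFAProb μ) {w w' : Set α →₀ ℝ} {c : ℝ}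
    (hw : ∀ x, stepFn w x ≤ c + stepFn w' x) : stepIntegral μ w ≤ c + stepIntegral μ w' := by
  have := h.stepIntegral_mono (w' := single Set.univ c + w') fun x => by simpa using hw x
  simpa [h.1] using this

end StepFunctions

theorem card_filter_cells_bounds {n : ℕ} (hn : 0 < n) {o t : ℝ} (ho : 0 ≤ o) (ht : 0 ≤ t)
    (hot : o + t ≤ 1) :
    n * t - 2 ≤ #{j ∈ range n | o ≤ ((j : ℕ) : ℝ) / n ∧ (((j : ℕ) : ℝ) + 1) / n ≤ o + t} ∧
      (#{j ∈ range n | o ≤ ((j : ℕ) : ℝ) / n ∧ (((j : ℕ) : ℝ) + 1) / n ≤ o + t} : ℝ) ≤ n * t := by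
  have hn' : (0 : ℝ) < n := Nat.cast_pos.2 hn
  have hlo : 0 ≤ n * o := by positivity
  have hhi : 0 ≤ n * (o + t) := by positivity
  have hcells : {j ∈ range n | o ≤ ((j : ℕ) : ℝ) / n ∧ (((j : ℕ) : ℝ) + 1) / n ≤ o + t}
      = Finset.Ico ⌈n * o⌉₊ ⌊n * (o + t)⌋₊ := by
    have hfloor : ⌊n * (o + t)⌋₊ ≤ n :=
      Nat.floor_le_of_le (by nlinarith)
    ext j
    have hceil : o ≤ (j : ℝ) / n ↔ ⌈n * o⌉₊ ≤ j := by
      rw [le_div_iff₀ hn', Nat.ceil_le, mul_comm]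
    have hfl : ((j : ℝ) + 1) / n ≤ o + t ↔ j < ⌊n * (o + t)⌋₊ := by
      rw [div_le_iff₀ hn', ← Nat.add_one_le_iff, Nat.le_floor_iff hhi, mul_comm]
      push_cast; rfl
    simp only [Finset.mem_filter, Finset.mem_range, Finset.mem_Ico, hceil, hfl]
    omega
  rw [hcells, Nat.card_Ico]
  have h1 := Nat.floor_le hhi
  have h2 := Nat.lt_floor_add_one (n * (o + t))
  have h3 := Nat.le_ceil (n * o)
  have h4 := Nat.ceil_lt_add_one hlo
  rcases le_total ⌈n * o⌉₊ ⌊n * (o + t)⌋₊ with hle | hle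
  · rw [Nat.cast_sub hle]
    constructor <;> linarith
  · rw [Nat.sub_eq_zero_of_le hle, Nat.cast_zero]
    have : (⌊n * (o + t)⌋₊ : ℝ) ≤ ⌈n * o⌉₊ := by exact_mod_cast hle
    constructor <;> nlinarith

section Bands

variable {α : Type*}

def bandSet (o f : α → ℝ) (n j : ℕ) : Set α := {a | o a ≤ j / n ∧ (j + 1) / n ≤ o a + f a}

noncomputable def bandStep (o f : α → ℝ) (n : ℕ) : Set α →₀ ℝ :=
  ∑ j ∈ range n, single (bandSet o f n j) (1 / n)

theorem linearCombination_bandStep {M : Type*} [AddCommMonoid M] [Module ℝ M] (v : Set α → M)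
    (o f : α → ℝ) (n : ℕ) :
    linearCombination ℝ v (bandStep o f n) = ∑ j ∈ range n, (1 / n : ℝ) • v (bandSet o f n j) := by
  simp [bandStep, map_sum]

theorem stepFn_bandStep (o f : α → ℝ) (n : ℕ) (a : α) :
    stepFn (bandStep o f n) a
      = #{j ∈ range n | o a ≤ ((j : ℕ) : ℝ) / n ∧ (((j : ℕ) : ℝ) + 1) / n ≤ o a + f a} / n := by
  classical
  simp only [stepFn, linearCombination_bandStep, Finset.sum_apply, Pi.smul_apply, smul_eq_mul,
    ← Finset.mul_sum, Set.indicator_apply, Pi.one_apply, bandSet, Set.mem_ofPred_eq,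
    Finset.sum_boole]
  ring

variable {o f : α → ℝ} {a : α}

theorem stepFn_bandStep_le {n : ℕ} (hn : 0 < n) (ho : 0 ≤ o a) (hf : 0 ≤ f a)
    (hof : o a + f a ≤ 1) : stepFn (bandStep o f n) a ≤ f a := by
  rw [stepFn_bandStep, div_le_iff₀ (Nat.cast_pos.2 hn), mul_comm]
  exact (card_filter_cells_bounds hn ho hf hof).2

theorem le_stepFn_bandStep {n : ℕ} (hn : 0 < n) (ho : 0 ≤ o a) (hf : 0 ≤ f a)
    (hof : o a + f a ≤ 1) : f a ≤ 2 / n + stepFn (bandStep o f n) a := by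
  rw [stepFn_bandStep, ← add_div, le_div_iff₀ (Nat.cast_pos.2 hn), mul_comm]
  linarith [(card_filter_cells_bounds hn ho hf hof).1]

end Bands

theorem le_of_forall_le_add_div {a b c : ℝ} (h : ∀ n : ℕ, 0 < n → a ≤ b + c / n) : a ≤ b := by
  have hlim : Filter.Tendsto (fun n : ℕ => b + c / n) Filter.atTop (nhds b) := by
    simpa using tendsto_const_nhds.add (tendsto_const_div_atTop_nhds_zero_nat c)
  exact ge_of_tendsto hlim (Filter.eventually_atTop.2 ⟨1, fun n hn => h n hn⟩)

section LowerIntegral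

variable {α : Type*} {μ : Set α → ℝ} {f g : α → ℝ}

noncomputable def lowerIntegral (μ : Set α → ℝ) (f : α → ℝ) : ℝ :=
  sSup (stepIntegral μ '' {w | stepFn w ≤ f})

theorem IsFAProb.le_lowerIntegral (h : IsFAProb μ) (hf : f ≤ 1) {w : Set α →₀ ℝ}
    (hw : stepFn w ≤ f) : stepIntegral μ w ≤ lowerIntegral μ f := by
  refine le_csSup ⟨1, ?_⟩ ⟨w, hw, rfl⟩
  rintro _ ⟨w', hw', rfl⟩
  simpa using h.stepIntegral_le_add (w' := 0) (c := 1) fun x => by simpa using hw' x |>.trans (hf x)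

theorem lowerIntegral_le (hf : 0 ≤ f) {C : ℝ}
    (H : ∀ w : Set α →₀ ℝ, stepFn w ≤ f → stepIntegral μ w ≤ C) : lowerIntegral μ f ≤ C :=
  csSup_le ⟨0, 0, by simpa using hf, map_zero _⟩ (by rintro _ ⟨w, hw, rfl⟩; exact H w hw)

theorem IsFAProb.lowerIntegral_nonneg (h : IsFAProb μ) (hf0 : 0 ≤ f) (hf1 : f ≤ 1) :
    0 ≤ lowerIntegral μ f := by
  simpa using h.le_lowerIntegral hf1 (w := 0) (by simpa using hf0)

theorem IsFAProb.lowerIntegral_one (h : IsFAProb μ) : lowerIntegral μ 1 = 1 := by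
  refine le_antisymm (lowerIntegral_le zero_le_one fun w hw => ?_) ?_
  · simpa using h.stepIntegral_le_add (w' := 0) (c := 1) fun x => by simpa using hw x
  · simpa [h.1] using h.le_lowerIntegral le_rfl (w := single Set.univ 1) (by simp)

theorem IsFAProb.stepIntegral_le_lowerIntegral_add (h : IsFAProb μ) (hf0 : 0 ≤ f) (hg0 : 0 ≤ g)
    (hfg : f + g ≤ 1) {w : Set α →₀ ℝ} (hw : stepFn w ≤ f + g) {n : ℕ} (hn : 0 < n) :
    stepIntegral μ w ≤ 4 / n + (lowerIntegral μ f + lowerIntegral μ g) := by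
  have hf1 : f ≤ 1 := fun a => (le_add_of_nonneg_right (hg0 a)).trans (hfg a)
  have hg1 : g ≤ 1 := fun a => (le_add_of_nonneg_left (hf0 a)).trans (hfg a)
  have band_le {φ : α → ℝ} (h0 : 0 ≤ φ) (h1 : φ ≤ 1) : stepFn (bandStep 0 φ n) ≤ φ :=
    fun a => stepFn_bandStep_le hn le_rfl (h0 a) (by simpa using h1 a)
  have le_band {φ : α → ℝ} (h0 : 0 ≤ φ) (h1 : φ ≤ 1) (a : α) :
      φ a ≤ 2 / n + stepFn (bandStep 0 φ n) a :=
    le_stepFn_bandStep hn le_rfl (h0 a) (by simpa using h1 a)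
  have hsplit := h.stepIntegral_le_add (w := w) (w' := bandStep 0 f n + bandStep 0 g n)
    (c := 4 / n) fun a => by
      have := hw a
      simp only [Pi.add_apply, map_add] at this ⊢
      linarith [le_band hf0 hf1 a, le_band hg0 hg1 a, add_div (2 : ℝ) 2 n]
  rw [map_add] at hsplit
  linarith [h.le_lowerIntegral hf1 (band_le hf0 hf1), h.le_lowerIntegral hg1 (band_le hg0 hg1)]

theorem IsFAProb.lowerIntegral_add (h : IsFAProb μ) (hf0 : 0 ≤ f) (hg0 : 0 ≤ g)
    (hfg : f + g ≤ 1) : lowerIntegral μ (f + g) = lowerIntegral μ f + lowerIntegral μ g := by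
  refine le_antisymm (lowerIntegral_le (add_nonneg hf0 hg0) fun w hw => ?_) ?_
  · refine le_of_forall_le_add_div (c := 4) fun n hn => ?_
    linarith [h.stepIntegral_le_lowerIntegral_add hf0 hg0 hfg hw hn]
  · rw [← le_sub_iff_add_le]
    refine lowerIntegral_le hf0 fun w₁ hw₁ => ?_
    rw [le_sub_comm]
    refine lowerIntegral_le hg0 fun w₂ hw₂ => ?_
    rw [le_sub_iff_add_le', ← map_add]
    exact h.le_lowerIntegral hfg (by simpa using add_le_add hw₁ hw₂)

end LowerIntegral

theorem Set.exists_finset_coe_eq_of_not_exists_card_eq {α : Type*} {s : Set α} {k : ℕ}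
    (h : ¬ ∃ F : Finset α, #F = k ∧ ↑F ⊆ s) : ∃ F : Finset α, ↑F = s ∧ #F ≤ k := by
  have hfin : s.Finite := by
    by_contra hinf
    obtain ⟨F, hFs, hF⟩ := Set.Infinite.exists_subset_card_eq hinf k
    exact h ⟨F, hF, hFs⟩
  refine ⟨hfin.toFinset, hfin.coe_toFinset, not_lt.1 fun hk => ?_⟩
  obtain ⟨F, hFs, hF⟩ := Finset.exists_subset_card_eq hk.le
  exact h ⟨F, hF, fun a ha => hfin.mem_toFinset.1 (hFs ha)⟩

section Fibers

variable {α β : Type*} {μ : Set α → ℝ} {ν : Set β → ℝ} {φ : α → β}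

theorem sum_indicator_le_indicator_image {E : Set α} (hE : InjOn φ E) {F : Finset α} {b : β}
    (hF : ∀ a ∈ F, φ a = b) : ∑ a ∈ F, E.indicator (1 : α → ℝ) a ≤ (φ '' E).indicator 1 b := by
  classical
  by_cases hb : b ∈ φ '' E
  · simp only [Set.indicator_apply, Pi.one_apply, Finset.sum_boole, hb, if_true]
    exact_mod_cast Finset.card_le_one.2 fun a ha a' ha' =>
      hE (Finset.mem_filter.1 ha).2 (Finset.mem_filter.1 ha').2
        ((hF a (Finset.mem_filter.1 ha).1).trans (hF a' (Finset.mem_filter.1 ha').1).symm)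
  · rw [Set.indicator_of_notMem hb]
    exact (Finset.sum_eq_zero fun a ha =>
      Set.indicator_of_notMem (fun haE => hb ⟨a, haE, hF a ha⟩) _).le

theorem stepFn_mapDomain_image_apply (w : Set α →₀ ℝ) (b : β) :
    stepFn (w.mapDomain (φ '' ·)) b = ∑ E ∈ w.support, w E * (φ '' E).indicator 1 b := by
  rw [stepFn, linearCombination_mapDomain, linearCombination_apply, Finsupp.sum, Finset.sum_apply]
  simp

theorem sum_stepFn_le_stepFn_mapDomain_image {w : Set α →₀ ℝ} (hw0 : 0 ≤ w)
    (hinj : ∀ E ∈ w.support, InjOn φ E) {F : Finset α} {b : β} (hF : ∀ a ∈ F, φ a = b) :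
    ∑ a ∈ F, stepFn w a ≤ stepFn (w.mapDomain (φ '' ·)) b := by
  rw [stepFn_mapDomain_image_apply]
  simp only [stepFn_apply]
  rw [Finset.sum_comm]
  refine Finset.sum_le_sum fun E hE => ?_
  rw [← Finset.mul_sum]
  exact mul_le_mul_of_nonneg_left (sum_indicator_le_indicator_image (hinj E hE) hF) (hw0 E)

theorem stepIntegral_mapDomain_image (hφ : ∀ P, InjOn φ P → ν (φ '' P) = μ P)
    {w : Set α →₀ ℝ} (hinj : ∀ E ∈ w.support, InjOn φ E) :
    stepIntegral ν (w.mapDomain (φ '' ·)) = stepIntegral μ w := by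
  rw [stepIntegral, linearCombination_mapDomain, linearCombination_apply, stepIntegral_apply]
  exact Finset.sum_congr rfl fun E hE => by simp [hφ E (hinj E hE), mul_comm]

/-- The `i`-th points of the chosen fibres form `k` disjoint sets, each mapped injectively onto
`N`. -/
theorem IsFAProb.natCast_mul_le_one (hμ : IsFAProb μ) (hφ : ∀ P, InjOn φ P → ν (φ '' P) = μ P)
    (N : Set β) (k : ℕ) (hN : ∀ b ∈ N, ∃ F : Finset α, #F = k ∧ ∀ a ∈ F, φ a = b) :
    k * ν N ≤ 1 := by
  choose F hFcard hFφ using hN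
  let v : N → Fin k → α := fun b i => ((F b b.2).equivFinOfCardEq (hFcard b b.2)).symm i
  have hvφ : ∀ b i, φ (v b i) = b := fun b i => hFφ b b.2 _ (Subtype.prop _)
  have hv_inj : ∀ b, Function.Injective (v b) := fun b =>
    Subtype.val_injective.comp (Equiv.injective _)
  let P : Fin k → Set α := fun i => Set.range (v · i)
  have hPinj : ∀ i, InjOn φ (P i) := by
    rintro i _ ⟨b, rfl⟩ _ ⟨b', rfl⟩ h
    rw [Subtype.ext (((hvφ b i).symm.trans h).trans (hvφ b' i))]
  have hPimage : ∀ i, φ '' P i = N := fun i => by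
    rw [← Set.range_comp]
    ext b
    simp [hvφ]
  have hPdisj : (↑(Finset.univ : Finset (Fin k)) : Set (Fin k)).PairwiseDisjoint P := by
    rintro i - j - hij
    refine Set.disjoint_left.2 ?_
    rintro _ ⟨b, rfl⟩ ⟨b', hb'⟩
    obtain rfl : b' = b := Subtype.ext (by rw [← hvφ b' j, ← hvφ b i]; exact congrArg φ hb')
    exact hij (hv_inj b' hb').symm
  have := hμ.le_one (⋃ i ∈ Finset.univ, P i)
  rw [hμ.biUnion_finset hPdisj] at this
  simpa [← hφ _ (hPinj _), hPimage] using this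

end Fibers

section Stacking

variable {α β : Type*} [LinearOrder α] {φ : α → β} {g : α → ℝ} {h : β → ℝ}

/-- Stacking the values of `g` on each fibre of `φ` in increasing order, the point `a` occupies
the interval `[fiberOffset φ g a, fiberOffset φ g a + g a]`. -/
noncomputable def fiberOffset (φ : α → β) (g : α → ℝ) (a : α) : ℝ :=
  sSup ((fun F : Finset α => ∑ a' ∈ F, g a') '' {F | ∀ a' ∈ F, φ a' = φ a ∧ a' < a})

theorem fiberOffset_add_le_of_forall {a : α} {d : ℝ}
    (H : ∀ F : Finset α, (∀ a' ∈ F, φ a' = φ a ∧ a' < a) → ∑ a' ∈ F, g a' + g a ≤ d) :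
    fiberOffset φ g a + g a ≤ d := by
  rw [← le_sub_iff_add_le]
  refine csSup_le ⟨0, ∅, by simp, by simp⟩ ?_
  rintro _ ⟨F, hF, rfl⟩
  exact le_sub_iff_add_le.2 (H F hF)

variable (hsum : ∀ b (F : Finset α), (∀ a ∈ F, φ a = b) → ∑ a ∈ F, g a ≤ h b)
include hsum

theorem bddAbove_fiberOffset (a : α) :
    BddAbove ((fun F : Finset α => ∑ a' ∈ F, g a') '' {F | ∀ a' ∈ F, φ a' = φ a ∧ a' < a}) := by
  refine ⟨h (φ a), ?_⟩
  rintro _ ⟨F, hF, rfl⟩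
  exact hsum _ F fun a' ha' => (hF a' ha').1

theorem fiberOffset_nonneg (a : α) : 0 ≤ fiberOffset φ g a :=
  le_csSup (bddAbove_fiberOffset hsum a) ⟨∅, by simp, by simp⟩

theorem fiberOffset_add_le (a : α) : fiberOffset φ g a + g a ≤ h (φ a) :=
  fiberOffset_add_le_of_forall fun F hF => by
    rw [add_comm, ← Finset.sum_insert fun haF => (hF a haF).2.false]
    exact hsum _ _ fun a' ha' => by
      rcases Finset.mem_insert.1 ha' with rfl | ha'
      exacts [rfl, (hF a' ha').1]

theorem fiberOffset_add_le_fiberOffset {a a' : α} (hφ : φ a' = φ a) (hlt : a' < a) :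
    fiberOffset φ g a' + g a' ≤ fiberOffset φ g a :=
  fiberOffset_add_le_of_forall fun F hF => by
    rw [add_comm, ← Finset.sum_insert fun haF => (hF a' haF).2.false]
    refine le_csSup (bddAbove_fiberOffset hsum a) ⟨_, fun a'' ha'' => ?_, rfl⟩
    rcases Finset.mem_insert.1 ha'' with rfl | ha''
    exacts [⟨hφ, hlt⟩, ⟨(hF a'' ha'').1.trans hφ, (hF a'' ha'').2.trans hlt⟩]

theorem injOn_bandSet_fiberOffset {n : ℕ} (hn : 0 < n) (j : ℕ) :
    InjOn φ (bandSet (fiberOffset φ g) g n j) := by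
  have hcell : (j : ℝ) / n < (j + 1) / n := by gcongr; linarith
  intro a ha a' ha' heq
  by_contra hne
  rcases lt_or_gt_of_ne hne with hlt | hlt
  · linarith [fiberOffset_add_le_fiberOffset hsum heq hlt, ha.2, ha'.1]
  · linarith [fiberOffset_add_le_fiberOffset hsum heq.symm hlt, ha.1, ha'.2]

theorem exists_stack (hg0 : 0 ≤ g) (h1 : h ≤ 1) {n : ℕ} (hn : 0 < n) :
    ∃ w : Set α →₀ ℝ, 0 ≤ w ∧ (∀ E ∈ w.support, InjOn φ E) ∧ stepFn w ≤ g ∧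
      (∀ a, g a ≤ 2 / n + stepFn w a) ∧ stepFn (w.mapDomain (φ '' ·)) ≤ h := by
  classical
  have ho := fiberOffset_nonneg hsum
  have hog : ∀ a, fiberOffset φ g a + g a ≤ 1 := fun a => (fiberOffset_add_le hsum a).trans (h1 _)
  refine ⟨bandStep (fiberOffset φ g) g n, fun E => ?_, fun E hE => ?_,
    fun a => stepFn_bandStep_le hn (ho a) (hg0 a) (hog a),
    fun a => le_stepFn_bandStep hn (ho a) (hg0 a) (hog a), fun b => ?_⟩
  · simp only [bandStep, Finsupp.coe_finsetSum, Finset.sum_apply, single_apply]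
    exact Finset.sum_nonneg fun j _ => by split_ifs <;> positivity
  · obtain ⟨j, -, hj⟩ := Finset.mem_biUnion.1 (Finsupp.support_finsetSum hE)
    rw [Finset.mem_singleton.1 (Finsupp.support_single_subset hj)]
    exact injOn_bandSet_fiberOffset hsum hn j
  · have hband : ∀ j, φ '' bandSet (fiberOffset φ g) g n j ⊆ bandSet 0 h n j := by
      rintro j _ ⟨a, ha, rfl⟩
      exact ⟨by simp only [Pi.zero_apply]; positivity,
        by simpa using ha.2.trans (fiberOffset_add_le hsum a)⟩
    have h0 : 0 ≤ h b := by simpa using hsum b ∅ (by simp)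
    refine le_trans ?_ (stepFn_bandStep_le (o := 0) hn le_rfl h0 (by simpa using h1 b))
    rw [stepFn, linearCombination_mapDomain, linearCombination_bandStep,
        linearCombination_bandStep, Finset.sum_apply, Finset.sum_apply]
    exact Finset.sum_le_sum fun j _ => smul_le_smul_of_nonneg_left
      (Set.indicator_le_indicator_of_subset (f := (1 : β → ℝ)) (hband j) zero_le_one b)
      (by positivity : (0 : ℝ) ≤ 1 / n)

end Stacking

section Pushforward

variable {α β : Type*} {μ : Set α → ℝ} {ν : Set β → ℝ} {φ : α → β} {g : α → ℝ} {h : β → ℝ}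

/-- Where a fibre of `φ` meets `R b` in at least `k` points, the bound on `h` is lost, but these
`b` have measure at most `1 / k`. -/
theorem stepIntegral_le_lowerIntegral_add_of_fiberwise [LinearOrder α] (hμ : IsFAProb μ)
    (hν : IsFAProb ν) (hφ : ∀ P, InjOn φ P → ν (φ '' P) = μ P) (hg0 : 0 ≤ g) (h1 : h ≤ 1)
    {R : β → Set α} (hR : ∀ b, R b ⊆ φ ⁻¹' {b})
    (hsum_le : ∀ b (F : Finset α), (∀ a ∈ F, φ a = b) → ∑ a ∈ F, g a ≤ h b)
    (hle_sum : ∀ b (F : Finset α), ↑F = R b → h b ≤ ∑ a ∈ F, g a)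
    {w : Set β →₀ ℝ} (hw : stepFn w ≤ h) {k n : ℕ} (hk : 0 < k) (hn : 0 < n) :
    stepIntegral ν w ≤ lowerIntegral μ g + 1 / k + 2 * k / n := by
  obtain ⟨v, hv0, hvinj, hvg, hgv, -⟩ := exists_stack hsum_le hg0 h1 hn
  set N := {b | ∃ F : Finset α, #F = k ∧ ↑F ⊆ R b}
  have hN : k * ν N ≤ 1 := hμ.natCast_mul_le_one hφ N k fun b ⟨F, hF, hFR⟩ =>
    ⟨F, hF, fun a ha => hR b (hFR ha)⟩
  have hpt : ∀ b, stepFn w b ≤ 2 * k / n + stepFn (single N 1 + v.mapDomain (φ '' ·)) b := by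
    intro b
    have hv_nonneg := sum_stepFn_le_stepFn_mapDomain_image hv0 hvinj (F := ∅) (b := b) (by simp)
    rw [map_add, Pi.add_apply, stepFn_single]
    by_cases hb : b ∈ N
    · simp only [Finset.sum_empty, Pi.smul_apply, Set.indicator_of_mem hb, Pi.one_apply,
        smul_eq_mul, mul_one] at hv_nonneg ⊢
      linarith [(hw b).trans (h1 b), Pi.one_apply (M := fun _ : β => ℝ) b,
        (by positivity : (0 : ℝ) ≤ 2 * k / n)]
    obtain ⟨F, hFR, hFk⟩ := Set.exists_finset_coe_eq_of_not_exists_card_eq hb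
    have hFφ : ∀ a ∈ F, φ a = b := fun a ha => hR b (hFR ▸ ha)
    have hFk' : (#F : ℝ) ≤ k := by exact_mod_cast hFk
    calc stepFn w b ≤ ∑ a ∈ F, g a := (hw b).trans (hle_sum b F hFR)
      _ ≤ ∑ a ∈ F, (2 / n + stepFn v a) := Finset.sum_le_sum fun a _ => hgv a
      _ = #F * (2 / n) + ∑ a ∈ F, stepFn v a := by
        rw [Finset.sum_add_distrib, Finset.sum_const, nsmul_eq_mul]
      _ ≤ k * (2 / n) + stepFn (v.mapDomain (φ '' ·)) b := by
        gcongr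
        exact sum_stepFn_le_stepFn_mapDomain_image hv0 hvinj hFφ
      _ = _ := by simp [Set.indicator_of_notMem hb]; ring
  have hw_le := hν.stepIntegral_le_add hpt
  rw [map_add, stepIntegral_single, one_mul, stepIntegral_mapDomain_image hφ hvinj] at hw_le
  have hNk : ν N ≤ 1 / k := by rw [le_div_iff₀ (Nat.cast_pos.2 hk), mul_comm]; exact hN
  have hg1 : g ≤ 1 := fun a => by simpa using (hsum_le (φ a) {a} (by simp)).trans (h1 _)
  linarith [hμ.le_lowerIntegral hg1 hvg]

/-- `hsum_le` and `hle_sum` say that `h` is the sum of `g` over the fibres of `φ`, where only the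
part `R b` of the fibre over `b` counts when it is finite. -/
theorem lowerIntegral_eq_of_fiberwise (hμ : IsFAProb μ) (hν : IsFAProb ν)
    (hφ : ∀ P, InjOn φ P → ν (φ '' P) = μ P) (hg0 : 0 ≤ g) (h1 : h ≤ 1)
    {R : β → Set α} (hR : ∀ b, R b ⊆ φ ⁻¹' {b})
    (hsum_le : ∀ b (F : Finset α), (∀ a ∈ F, φ a = b) → ∑ a ∈ F, g a ≤ h b)
    (hle_sum : ∀ b (F : Finset α), ↑F = R b → h b ≤ ∑ a ∈ F, g a) :
    lowerIntegral ν h = lowerIntegral μ g := by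
  let _ : LinearOrder α := IsWellOrder.linearOrder WellOrderingRel
  have h0 : 0 ≤ h := fun b => by simpa using hsum_le b ∅ (by simp)
  refine le_antisymm (lowerIntegral_le h0 fun w hw => ?_) (lowerIntegral_le hg0 fun w hw => ?_)
  · refine le_of_forall_le_add_div (c := 1) fun k hk => ?_
    refine le_of_forall_le_add_div (c := 2 * k) fun n hn => ?_
    have := stepIntegral_le_lowerIntegral_add_of_fiberwise hμ hν hφ hg0 h1 hR hsum_le hle_sum hw
      hk hn
    linarith
  · refine le_of_forall_le_add_div (c := 2) fun n hn => ?_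
    obtain ⟨v, -, hvinj, -, hgv, hvh⟩ := exists_stack hsum_le hg0 h1 hn
    have := hμ.stepIntegral_le_add fun a => (hw a).trans (hgv a)
    rw [← stepIntegral_mapDomain_image hφ hvinj] at this
    linarith [hν.le_lowerIntegral h1 hvh]

end Pushforward

section Product

variable {S T : Type*}

noncomputable def prodMeasure (μ : Set S → ℝ) (ν : Set T → ℝ) (A : Set (S × T)) : ℝ :=
  lowerIntegral μ fun s => ν (Prod.mk s ⁻¹' A)

theorem IsFAProb.prodMeasure {μ : Set S → ℝ} {ν : Set T → ℝ} (hμ : IsFAProb μ)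
    (hν : IsFAProb ν) : IsFAProb (prodMeasure μ ν) := by
  refine ⟨?_, fun A => hμ.lowerIntegral_nonneg (fun s => hν.nonneg _) (fun s => hν.le_one _),
    fun A B hAB => ?_⟩
  · have hslice : (fun s : S => ν (Prod.mk s ⁻¹' Set.univ)) = 1 := funext fun s => by simp [hν.1]
    rw [_root_.prodMeasure, hslice, hμ.lowerIntegral_one]
  · have hslice : (fun s => ν (Prod.mk s ⁻¹' (A ∪ B)))
        = (fun s => ν (Prod.mk s ⁻¹' A)) + fun s => ν (Prod.mk s ⁻¹' B) :=
      funext fun s => hν.union (hAB.preimage _)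
    rw [_root_.prodMeasure, hslice, hμ.lowerIntegral_add (fun s => hν.nonneg _)
      (fun s => hν.nonneg _) (hslice ▸ fun s => hν.le_one _)]
    rfl

variable [Mul S] [Mul T] {x : S} {y : T} {A : Set (S × T)}

theorem injOn_mul_preimage_mk (hinj : InjOn ((x, y) * ·) A) (a : S) :
    InjOn (y * ·) (Prod.mk a ⁻¹' A) := fun b hb b' hb' hbb' =>
  congrArg Prod.snd (hinj hb hb' (by simp only [Prod.mk_mul_mk, hbb']))

theorem pairwiseDisjoint_mul_preimage_mk (hinj : InjOn ((x, y) * ·) A) {s : S} :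
    ((x * ·) ⁻¹' {s}).PairwiseDisjoint fun a => (y * ·) '' (Prod.mk a ⁻¹' A) := by
  rintro a ha a' ha' hne
  refine Set.disjoint_left.2 ?_
  rintro _ ⟨b, hb, rfl⟩ ⟨b', hb', hbb'⟩
  refine hne (congrArg Prod.fst (hinj hb hb' ?_))
  simp only [Prod.mk_mul_mk, hbb', ha.out.trans ha'.out.symm]

theorem mul_preimage_mk_subset {a s : S} (has : x * a = s) :
    (y * ·) '' (Prod.mk a ⁻¹' A) ⊆ Prod.mk s ⁻¹' (((x, y) * ·) '' A) := by
  rintro _ ⟨b, hb, rfl⟩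
  exact ⟨(a, b), hb, by simp [has]⟩

theorem preimage_mk_image_mul_subset (s : S) :
    Prod.mk s ⁻¹' (((x, y) * ·) '' A)
      ⊆ ⋃ a ∈ {a | x * a = s ∧ (Prod.mk a ⁻¹' A).Nonempty}, (y * ·) '' (Prod.mk a ⁻¹' A) := by
  rintro t ⟨⟨a, b⟩, hab, heq⟩
  simp only [Prod.mk_mul_mk, Prod.mk.injEq] at heq
  exact Set.mem_biUnion ⟨heq.1, b, hab⟩ ⟨b, hab, heq.2⟩

theorem LeftFairlyInv.prodMeasure {μ : Set S → ℝ} {ν : Set T → ℝ} (hμ : IsFAProb μ)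
    (hμf : LeftFairlyInv μ) (hν : IsFAProb ν) (hνf : LeftFairlyInv ν) :
    LeftFairlyInv (prodMeasure μ ν) := by
  rintro ⟨x, y⟩ A hinj
  have hslice (a : S) : ν ((y * ·) '' (Prod.mk a ⁻¹' A)) = ν (Prod.mk a ⁻¹' A) :=
    hνf y _ (injOn_mul_preimage_mk hinj a)
  refine lowerIntegral_eq_of_fiberwise hμ hμ (hμf x) (fun s => hν.nonneg _)
    (fun s => hν.le_one _) (R := fun s => {a | x * a = s ∧ (Prod.mk a ⁻¹' A).Nonempty})
    (fun _ _ ha => ha.1) (fun s F hF => ?_) (fun s F hF => ?_)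
  · simp_rw [← hslice]
    rw [← hν.biUnion_finset ((pairwiseDisjoint_mul_preimage_mk hinj).subset fun a ha => hF a ha)]
    exact hν.mono (Set.iUnion₂_subset fun a ha => mul_preimage_mk_subset (hF a ha))
  · simp_rw [← hslice]
    refine (hν.mono ?_).trans (hν.biUnion_finset_le F _)
    rw [← Finset.set_biUnion_coe, hF]
    exact preimage_mk_image_mul_subset s

end Product

/-- The direct product of two left fairly amenable semigroups is left fairly
amenable. -/
theorem stmt9 (S T : Type*) [Semigroup S] [Semigroup T]
    (hS : ∃ μ : Set S → ℝ, IsFAProb μ ∧ LeftFairlyInv μ)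
    (hT : ∃ μ : Set T → ℝ, IsFAProb μ ∧ LeftFairlyInv μ) :
    ∃ μ : Set (S × T) → ℝ, IsFAProb μ ∧ LeftFairlyInv μ := by
  obtain ⟨μ, hμ, hμf⟩ := hS
  obtain ⟨ν, hν, hνf⟩ := hT
  exact ⟨prodMeasure μ ν, hμ.prodMeasure hν, hμf.prodMeasure hμ hν hνf⟩
end

section
/- Let S be a semigroup admitting a left fairly invariant finitely-additive probability measure μ, and let T be a subsemigroup with μ(T) > 0. Then ν(A) := μ(A)/μ(T) for A ⊆ T is a left fairly invariant finitely-additive probability measure on T; hence T is left fairly amenable. -/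
open Set

/-- A subsemigroup of positive measure inherits left fair amenability, with
normalized measure. -/
theorem stmt11 {S : Type*} [Semigroup S] (μ : Set S → ℝ)
    (hμ : IsFAProb μ) (hinv : LeftFairlyInv μ)
    (T : Subsemigroup S) (hT : 0 < μ (T : Set S)) :
    IsFAProb (fun A : Set T => μ (Subtype.val '' A) / μ (T : Set S)) ∧
    LeftFairlyInv (fun A : Set T => μ (Subtype.val '' A) / μ (T : Set S)) := by
  obtain ⟨hu, hnn, hadd⟩ := hμ
  refine ⟨⟨?_, fun A => div_nonneg (hnn _) hT.le, fun A B hAB => ?_⟩, ?_⟩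
  · simp only [Set.image_univ]
    rw [show Set.range (Subtype.val : T → S) = (T : Set S) from Subtype.range_val]
    exact div_self hT.ne'
  · simp only
    rw [Set.image_union,
      hadd _ _ (Set.disjoint_image_of_injective Subtype.val_injective hAB), add_div]
  · intro t A hinjA
    simp only
    congr 1
    have h1 : Subtype.val '' ((fun x => t * x) '' A) =
        (fun x => (t : S) * x) '' (Subtype.val '' A) := by
      ext x
      constructor
      · rintro ⟨y, ⟨a, ha, rfl⟩, rfl⟩
        exact ⟨a, ⟨a, ha, rfl⟩, rfl⟩
      · rintro ⟨y, ⟨a, ha, rfl⟩, rfl⟩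
        exact ⟨t * a, ⟨a, ha, rfl⟩, rfl⟩
    rw [h1]
    apply hinv
    rintro x ⟨a, ha, rfl⟩ y ⟨b, hb, rfl⟩ hxy
    exact congrArg Subtype.val (hinjA ha hb (Subtype.ext hxy))
end

section
/- Let G be a group and G⁰ the group with a zero adjoined. Then G⁰ is left fairly amenable if and only if G is an amenable group. -/
open Set

structure IsFAContent {S : Type*} (m : Set S → ℝ) : Prop where
  nonneg : ∀ A, 0 ≤ m A
  union : ∀ A B, Disjoint A B → m (A ∪ B) = m A + m B

namespace IsFAContent

variable {S T : Type*} {m m' : Set S → ℝ}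

theorem empty (h : IsFAContent m) : m ∅ = 0 := by
  have := h.union ∅ ∅ (disjoint_empty _)
  rw [empty_union] at this
  linarith

theorem mono (h : IsFAContent m) {A B : Set S} (hAB : A ⊆ B) : m A ≤ m B := by
  rw [← union_sdiff_cancel hAB, h.union A (B \ A) disjoint_sdiff_right]
  linarith [h.nonneg (B \ A)]

theorem add (h : IsFAContent m) (h' : IsFAContent m') : IsFAContent (fun A => m A + m' A) where
  nonneg A := add_nonneg (h.nonneg A) (h'.nonneg A)
  union A B hAB := by simp only [h.union A B hAB, h'.union A B hAB]; ring

theorem comp_preimage (h : IsFAContent m) (f : S → T) :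
    IsFAContent (fun B => m (f ⁻¹' B)) where
  nonneg B := h.nonneg _
  union A B hAB := by simp only [preimage_union, h.union _ _ (hAB.preimage f)]

theorem comp_image (h : IsFAContent m) {f : T → S} (hf : f.Injective) :
    IsFAContent (fun A => m (f '' A)) where
  nonneg A := h.nonneg _
  union A B hAB := by simp only [image_union, h.union _ _ ((disjoint_image_iff hf).mpr hAB)]

theorem isFAProb_div_univ (h : IsFAContent m) (hpos : 0 < m univ) :
    IsFAProb (fun A => m A / m univ) :=
  ⟨div_self hpos.ne', fun A => div_nonneg (h.nonneg A) hpos.le,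
    fun A B hAB => by simp only [h.union A B hAB, add_div]⟩

end IsFAContent

theorem isFAContent_indicator {S : Type*} (a : S) {c : ℝ} (hc : 0 ≤ c) :
    IsFAContent (fun B : Set S => B.indicator (fun _ => c) a) where
  nonneg B := indicator_nonneg (fun _ _ => hc) a
  union A B hAB := by rw [indicator_union_of_disjoint hAB]

theorem IsFAProb.isFAContent {S : Type*} {μ : Set S → ℝ} (h : IsFAProb μ) : IsFAContent μ :=
  ⟨h.2.1, h.2.2⟩

theorem measure_singleton_eq_of_leftInvariant {G : Type*} [Group G] {ν : Set G → ℝ}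
    (hν : ∀ (g : G) (A : Set G), ν ((fun x => g * x) '' A) = ν A) (g : G) :
    ν {g} = ν {1} := by
  simpa using hν g {1}

theorem Set.Subsingleton.of_injOn_zero_mul {M : Type*} [MulZeroClass M] {A : Set M}
    (h : InjOn (fun x => (0 : M) * x) A) : A.Subsingleton :=
  fun _ hx _ hy => h hx hy (by simp only [zero_mul])

namespace WithZero

theorem insert_zero_range_coe {α : Type*} :
    insert 0 (range ((↑) : α → WithZero α)) = univ := by
  refine eq_univ_of_forall fun x => ?_
  induction x using WithZero.recZeroCoe with
  | zero => exact mem_insert _ _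
  | coe g => exact mem_insert_of_mem _ (mem_range_self g)

theorem zero_notMem_range_coe {α : Type*} :
    (0 : WithZero α) ∉ range ((↑) : α → WithZero α) := by
  rintro ⟨a, ha⟩
  exact coe_ne_zero ha

variable {G : Type*} [Group G]

theorem image_coe_image_mul_left (g : G) (A : Set G) :
    ((↑) : G → WithZero G) '' ((fun x => g * x) '' A) =
      (fun x => (g : WithZero G) * x) '' (((↑) : G → WithZero G) '' A) := by
  simp only [image_image, coe_mul]

theorem preimage_coe_image_mul_left (g : G) (B : Set (WithZero G)) :
    ((↑) : G → WithZero G) ⁻¹' ((fun x => (g : WithZero G) * x) '' B) =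
      (fun x => g * x) '' (((↑) : G → WithZero G) ⁻¹' B) := by
  ext x
  simp only [mem_preimage, mem_image]
  constructor
  · rintro ⟨b, hb, hgb⟩
    induction b using WithZero.recZeroCoe with
    | zero => exact absurd hgb.symm (by simp)
    | coe y => exact ⟨y, hb, coe_injective (by simpa using hgb)⟩
  · rintro ⟨y, hy, rfl⟩
    exact ⟨y, hy, (coe_mul g y).symm⟩

theorem zero_mem_image_coe_mul_left_iff (g : G) (B : Set (WithZero G)) :
    (0 : WithZero G) ∈ (fun x => (g : WithZero G) * x) '' B ↔ (0 : WithZero G) ∈ B := by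
  simp [coe_ne_zero]

end WithZero

/-- Fair invariance under `0` gives `μ {0} = μ {1}`, so the copy of `G` carries at least half
the mass. -/
theorem LeftFairlyInv.exists_leftInvariant_of_withZero {G : Type*} [Group G]
    {μ : Set (WithZero G) → ℝ} (hμ : IsFAProb μ) (hfair : LeftFairlyInv μ) :
    ∃ ν : Set G → ℝ, IsFAProb ν ∧
      ∀ (g : G) (A : Set G), ν ((fun x => g * x) '' A) = ν A := by
  have hm : IsFAContent fun A : Set G => μ (((↑) : G → WithZero G) '' A) :=
    hμ.isFAContent.comp_image WithZero.coe_injective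
  have hzero : μ {0} = μ {((1 : G) : WithZero G)} := by
    simpa using hfair 0 {((1 : G) : WithZero G)} (injOn_singleton _ _)
  have hone : μ {((1 : G) : WithZero G)} ≤ μ (range ((↑) : G → WithZero G)) :=
    hμ.isFAContent.mono (singleton_subset_iff.mpr (mem_range_self 1))
  have htotal : μ {0} + μ (range ((↑) : G → WithZero G)) = 1 := by
    rw [← hμ.1, ← WithZero.insert_zero_range_coe, insert_eq,
      hμ.2.2 _ _ (disjoint_singleton_left.mpr WithZero.zero_notMem_range_coe)]
  have hpos : 0 < μ (((↑) : G → WithZero G) '' univ) := by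
    rw [image_univ]
    linarith
  refine ⟨_, hm.isFAProb_div_univ hpos, fun g A => ?_⟩
  simp only [WithZero.image_coe_image_mul_left,
    hfair _ _ (mul_right_injective₀ (WithZero.coe_ne_zero (a := g))).injOn]

/-- All singletons of `G` have measure `c = ν {1}`; giving `0` the same mass `c` makes the
extension fairly invariant under multiplication by `0`, whose injectivity sets are the
subsingletons. -/
theorem exists_leftFairlyInv_withZero_of_leftInvariant {G : Type*} [Group G]
    {ν : Set G → ℝ} (hν : IsFAProb ν)
    (hinv : ∀ (g : G) (A : Set G), ν ((fun x => g * x) '' A) = ν A) :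
    ∃ μ : Set (WithZero G) → ℝ, IsFAProb μ ∧ LeftFairlyInv μ := by
  set c := ν {1}
  set m : Set (WithZero G) → ℝ :=
    fun B => B.indicator (fun _ => c) 0 + ν (((↑) : G → WithZero G) ⁻¹' B)
  have hm : IsFAContent m :=
    (isFAContent_indicator 0 (hν.2.1 _)).add (hν.isFAContent.comp_preimage _)
  have hsingleton (a : WithZero G) : m {a} = c := by
    induction a using WithZero.recZeroCoe with
    | zero =>
      simp only [m, indicator_of_mem (mem_singleton _),
        preimage_singleton_eq_empty.mpr WithZero.zero_notMem_range_coe, hν.isFAContent.empty,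
        add_zero]
    | coe g =>
      have hzero : (0 : WithZero G) ∉ ({(g : WithZero G)} : Set (WithZero G)) :=
        fun h => WithZero.coe_ne_zero (mem_singleton_iff.mp h).symm
      have hpre : ((↑) : G → WithZero G) ⁻¹' {(g : WithZero G)} = {g} := by
        rw [← image_singleton, WithZero.coe_injective.preimage_image]
      simp only [m, indicator_of_notMem hzero, hpre, zero_add,
        measure_singleton_eq_of_leftInvariant hinv, c]
  have hmfair : LeftFairlyInv m := by
    intro s A hs
    induction s using WithZero.recZeroCoe with
    | zero =>
      rcases (Set.Subsingleton.of_injOn_zero_mul hs).eq_empty_or_singleton with rfl | ⟨a, rfl⟩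
      · rw [image_empty]
      · rw [image_singleton, zero_mul, hsingleton, hsingleton]
    | coe g =>
      classical
      simp only [m, indicator_apply, WithZero.zero_mem_image_coe_mul_left_iff,
        WithZero.preimage_coe_image_mul_left, hinv]
  have hpos : 0 < m univ := by
    simp only [m, indicator_of_mem (mem_univ _), preimage_univ, hν.1]
    linarith [hν.2.1 {1}]
  exact ⟨_, hm.isFAProb_div_univ hpos, fun s A hs => by simp only [hmfair s A hs]⟩

/-- `G⁰` is left fairly amenable iff the group `G` is amenable. -/
theorem stmt13 (G : Type*) [Group G] :
    (∃ μ : Set (WithZero G) → ℝ, IsFAProb μ ∧ LeftFairlyInv μ) ↔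
    (∃ μ : Set G → ℝ, IsFAProb μ ∧
      ∀ (g : G) (A : Set G), μ ((fun x => g * x) '' A) = μ A) :=
  ⟨fun ⟨_, hμ, hfair⟩ => hfair.exists_leftInvariant_of_withZero hμ,
    fun ⟨_, hν, hinv⟩ => exists_leftFairlyInv_withZero_of_leftInvariant hν hinv⟩
end

section
/- The polycyclic monoid P₂ on two generators is not left fairly amenable: no finitely-additive probability measure μ on P₂ satisfies μ(sA) = μ(A) whenever left multiplication by s is injective on A. -/
open Set

/-- The polycyclic monoid on two generators: elements are `0` (= `none`) or
canonical forms `x⁻¹y` represented as pairs of words `(x, y)` over a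
two-letter alphabet. -/
def P2 : Type := Option (List Bool × List Bool)

/-- Multiplication of canonical forms: `(x⁻¹y)(w⁻¹z)` cancels `y` against `w`. -/
def P2.pmul (a b : List Bool × List Bool) : P2 :=
  if a.2.length ≥ b.1.length then
    (if b.1 <:+ a.2 then
      some (a.1, a.2.take (a.2.length - b.1.length) ++ b.2) else none)
  else
    (if a.2 <:+ b.1 then
      some (b.1.take (b.1.length - a.2.length) ++ a.1, b.2) else none)

instance : Mul P2 where
  mul a b :=
    match a, b with
    | none, _ => none
    | _, none => none
    | some a, some b => P2.pmul a b

/-!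
A left fairly invariant measure gives every singleton the mass of the zero, because
left multiplication by `0` is injective on a singleton; since `P₂` has two distinct
elements this mass is at most `1/2`. On the other hand `p⁻¹` and `q⁻¹` act injectively
on all of `P₂`, so `p⁻¹P₂` and `q⁻¹P₂` both have full measure and hence so does their
intersection, which is `{0}`.
-/

open Function

namespace IsFAProb

variable {S : Type*} {μ : Set S → ℝ}

theorem measure_mono (hμ : IsFAProb μ) {A B : Set S} (h : A ⊆ B) : μ A ≤ μ B := by
  have hsplit : μ B = μ A + μ (B \ A) := by
    rw [← hμ.2.2 A (B \ A) disjoint_sdiff_self_right, union_sdiff_cancel h]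
  linarith [hμ.2.1 (B \ A)]

theorem measure_le_one (hμ : IsFAProb μ) (A : Set S) : μ A ≤ 1 :=
  hμ.1 ▸ hμ.measure_mono (subset_univ A)

theorem measure_union_add_inter (hμ : IsFAProb μ) (A B : Set S) :
    μ (A ∪ B) + μ (A ∩ B) = μ A + μ B := by
  have hunion : μ (A ∪ B) = μ A + μ (B \ A) := by
    rw [← union_sdiff_self, hμ.2.2 A (B \ A) disjoint_sdiff_self_right]
  have hB : μ B = μ (B \ A) + μ (B ∩ A) := by
    rw [← hμ.2.2 _ _ (disjoint_sdiff_inter (s := B) (t := A)), sdiff_union_inter]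
  rw [hunion, hB, inter_comm]
  ring

theorem measure_inter_eq_one (hμ : IsFAProb μ) {A B : Set S} (hA : μ A = 1) (hB : μ B = 1) :
    μ (A ∩ B) = 1 := by
  have := hμ.measure_union_add_inter A B
  linarith [hμ.measure_le_one (A ∪ B), hμ.measure_le_one (A ∩ B)]

end IsFAProb

namespace LeftFairlyInv

variable {S : Type*} [Mul S] {μ : Set S → ℝ}

theorem measure_singleton_eq (hμ : LeftFairlyInv μ) {z : S} (hz : ∀ x, z * x = z) (x : S) :
    μ {x} = μ {z} := by
  have h := hμ z {x} (subsingleton_singleton.injOn _)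
  rwa [image_singleton, hz, eq_comm] at h

theorem measure_range_eq_one (hμ : LeftFairlyInv μ) (hμ₁ : IsFAProb μ) {s : S}
    (hs : Injective (s * ·)) : μ (range (s * ·)) = 1 := by
  rw [← image_univ, hμ s univ hs.injOn, hμ₁.1]

end LeftFairlyInv

theorem not_exists_leftFairlyInv_of_leftZero {S : Type*} [Mul S] {z x : S}
    (hz : ∀ y, z * y = z) (hx : x ≠ z) {s t : S} (hs : Injective (s * ·))
    (ht : Injective (t * ·)) (hst : range (s * ·) ∩ range (t * ·) ⊆ {z}) :
    ¬ ∃ μ : Set S → ℝ, IsFAProb μ ∧ LeftFairlyInv μ := by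
  rintro ⟨μ, hμ, hinv⟩
  have hz_one : 1 ≤ μ {z} := by
    rw [← hμ.measure_inter_eq_one (hinv.measure_range_eq_one hμ hs)
      (hinv.measure_range_eq_one hμ ht)]
    exact hμ.measure_mono hst
  have hpair : μ ({x} ∪ {z}) = μ {x} + μ {z} :=
    hμ.2.2 _ _ (disjoint_singleton.mpr hx)
  linarith [hμ.measure_le_one ({x} ∪ {z}), hinv.measure_singleton_eq hz x]

namespace P2

instance : Zero P2 := ⟨none⟩

def mk (x y : List Bool) : P2 := some (x, y)

def invGen (c : Bool) : P2 := mk [c] []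

theorem eq_zero_or_exists_eq_mk (a : P2) : a = 0 ∨ ∃ x y, a = mk x y :=
  match a with
  | none => .inl rfl
  | some (x, y) => .inr ⟨x, y, rfl⟩

theorem mk_ne_zero (x y : List Bool) : mk x y ≠ 0 :=
  Option.some_ne_none _

theorem mk_inj {x y x' y' : List Bool} : mk x y = mk x' y' ↔ x = x' ∧ y = y' :=
  Option.some_inj.trans Prod.mk_inj

theorem zero_mul (a : P2) : 0 * a = 0 := by
  rcases eq_zero_or_exists_eq_mk a with rfl | ⟨x, y, rfl⟩ <;> rfl

theorem invGen_mul_zero (c : Bool) : invGen c * 0 = 0 := rfl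

theorem invGen_mul_mk (c : Bool) (x y : List Bool) :
    invGen c * mk x y = mk (x ++ [c]) y := by
  show pmul ([c], []) (x, y) = some (x ++ [c], y)
  cases x <;> simp [pmul] <;> rfl

theorem injective_invGen_mul (c : Bool) : Injective (invGen c * ·) := by
  intro a b h
  rcases eq_zero_or_exists_eq_mk a with rfl | ⟨x, y, rfl⟩ <;>
    rcases eq_zero_or_exists_eq_mk b with rfl | ⟨x', y', rfl⟩ <;>
    simp only [invGen_mul_zero, invGen_mul_mk] at h
  · rfl
  · exact absurd h.symm (mk_ne_zero _ _)
  · exact absurd h (mk_ne_zero _ _)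
  · obtain ⟨hx, rfl⟩ := mk_inj.mp h
    rw [List.append_cancel_right hx]

theorem range_invGen_mul_inter : range (invGen true * ·) ∩ range (invGen false * ·) ⊆ {0} := by
  rintro _ ⟨⟨a, rfl⟩, ⟨b, h⟩⟩
  rcases eq_zero_or_exists_eq_mk a with rfl | ⟨x, y, rfl⟩
  · rfl
  rcases eq_zero_or_exists_eq_mk b with rfl | ⟨x', y', rfl⟩
  · exact h.symm
  simp only [invGen_mul_mk, mk_inj] at h
  simpa using congrArg List.getLast? h.1

end P2

/-- The polycyclic monoid `P₂` is not left fairly amenable. -/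
theorem stmt16 : ¬ ∃ μ : Set P2 → ℝ, IsFAProb μ ∧ LeftFairlyInv μ :=
  not_exists_leftFairlyInv_of_leftZero P2.zero_mul (P2.mk_ne_zero [] [])
    (P2.injective_invGen_mul true) (P2.injective_invGen_mul false) P2.range_invGen_mul_inter
end

section
/- Let S be a semigroup with a left fairly invariant finitely-additive probability measure μ, let s ∈ S, and let A ⊆ S be such that s∗χ_A is bounded. Then ∫ (s∗χ_A) dμ = ∫ χ_A dμ = μ(A), where the integral is the finitely-additive integral with respect to μ. -/
open Set

/-- The finitely-additive lower integral of `f` with respect to `μ`: supremum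
of integrals of nonnegative simple functions dominated by `f`. -/
noncomputable def faIntegral {S : Type*} (μ : Set S → ℝ) (f : S → ℝ) : ℝ :=
  sSup {r : ℝ | ∃ (n : ℕ) (a : Fin n → ℝ) (B : Fin n → Set S),
    (∀ i, 0 ≤ a i) ∧ (∀ x, ∑ i, a i * (B i).indicator 1 x ≤ f x) ∧
    r = ∑ i, a i * μ (B i)}

lemma fa_empty {S : Type*} {μ : Set S → ℝ} (hμ : IsFAProb μ) : μ ∅ = 0 := by
  have := hμ.2.2 ∅ ∅ (by simp)
  simp at this
  linarith

lemma fa_sum {S ι : Type*} {μ : Set S → ℝ} (hμ : IsFAProb μ) (t : Finset ι) (F : ι → Set S)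
    (hd : ∀ i ∈ t, ∀ j ∈ t, i ≠ j → Disjoint (F i) (F j)) :
    μ (⋃ i ∈ t, F i) = ∑ i ∈ t, μ (F i) := by
  classical
  induction t using Finset.induction_on with
  | empty => simpa using fa_empty hμ
  | @insert a t ha ih =>
    rw [Finset.sum_insert ha, ← ih (fun i hi j hj hij => hd i (Finset.mem_insert_of_mem hi) j
      (Finset.mem_insert_of_mem hj) hij)]
    have hdis : Disjoint (F a) (⋃ i ∈ t, F i) := by
      rw [Set.disjoint_iUnion₂_right]
      intro i hi
      exact hd a (Finset.mem_insert_self a t) i (Finset.mem_insert_of_mem hi)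
        (by rintro rfl; exact ha hi)
    rw [Finset.set_biUnion_insert, hμ.2.2 _ _ hdis]

lemma fa_key {S : Type*} {μ : Set S → ℝ} (hμ : IsFAProb μ) {ι : Type} [Fintype ι]
    (d : ι → ℝ) (D : ι → Set S)
    (h : ∀ x, ∑ k, d k * (D k).indicator (1 : S → ℝ) x ≤ 0) :
    ∑ k, d k * μ (D k) ≤ 0 := by
  classical
  set atom : (ι → Bool) → Set S := fun σ => {x | ∀ k, x ∈ D k ↔ σ k = true} with hatom
  have hdisj : ∀ σ τ : ι → Bool, σ ≠ τ → Disjoint (atom σ) (atom τ) := by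
    intro σ τ hστ
    rw [Set.disjoint_left]
    intro x hx hx'
    apply hστ
    funext k
    rw [← Bool.coe_iff_coe, ← hx k, ← hx' k]
  have hDk : ∀ k, D k = ⋃ σ ∈ Finset.univ.filter (fun σ : ι → Bool => σ k), atom σ := by
    intro k
    ext x
    simp only [Set.mem_iUnion, Finset.mem_filter, Finset.mem_univ, true_and]
    constructor
    · intro hx
      exact ⟨fun j => decide (x ∈ D j), by simpa using hx, fun j => by simp⟩
    · rintro ⟨σ, hσ, hxσ⟩
      exact (hxσ k).2 hσ
  have hμDk : ∀ k, μ (D k) = ∑ σ ∈ Finset.univ.filter (fun σ : ι → Bool => σ k), μ (atom σ) := by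
    intro k
    rw [hDk k]
    exact fa_sum hμ _ _ (fun σ _ τ _ h => hdisj σ τ h)
  calc ∑ k, d k * μ (D k)
      = ∑ k, ∑ σ ∈ Finset.univ.filter (fun σ : ι → Bool => σ k), d k * μ (atom σ) := by
        simp_rw [hμDk, Finset.mul_sum]
    _ = ∑ k, ∑ σ : ι → Bool, if σ k then d k * μ (atom σ) else 0 := by
        simp_rw [Finset.sum_filter]
    _ = ∑ σ : ι → Bool, (∑ k, if σ k then d k else 0) * μ (atom σ) := by
        rw [Finset.sum_comm]
        congr 1
        ext σ
        rw [Finset.sum_mul]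
        congr 1; ext k
        split <;> simp
    _ ≤ 0 := by
        apply Finset.sum_nonpos
        intro σ _
        rcases eq_or_ne (atom σ) ∅ with he | hne
        · simp [he, fa_empty hμ]
        · obtain ⟨x, hx⟩ := Set.nonempty_iff_ne_empty.2 hne
          have hval : (∑ k, if σ k then d k else 0) = ∑ k, d k * (D k).indicator (1 : S → ℝ) x := by
            congr 1; ext k
            by_cases hk : σ k = true
            · have : x ∈ D k := (hx k).2 hk
              simp [hk, Set.indicator_of_mem this]
            · have : x ∉ D k := fun hm => hk ((hx k).1 hm)
              simp [hk, Set.indicator_of_notMem this]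
          rw [hval]
          exact mul_nonpos_of_nonpos_of_nonneg (h x) (hμ.2.1 _)

lemma fa_simple_le {S : Type*} {μ : Set S → ℝ} (hμ : IsFAProb μ) {n m : ℕ}
    (a : Fin n → ℝ) (Bs : Fin n → Set S) (c : Fin m → ℝ) (Cs : Fin m → Set S)
    (h : ∀ x, ∑ i, a i * (Bs i).indicator (1 : S → ℝ) x ≤ ∑ j, c j * (Cs j).indicator (1 : S → ℝ) x) :
    ∑ i, a i * μ (Bs i) ≤ ∑ j, c j * μ (Cs j) := by
  have := fa_key hμ (ι := Fin n ⊕ Fin m) (Sum.elim a (fun j => -(c j))) (Sum.elim Bs Cs) ?_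
  · rw [Fintype.sum_sum_type] at this
    simp only [Sum.elim_inl, Sum.elim_inr, neg_mul] at this
    rw [Finset.sum_neg_distrib] at this
    linarith
  · intro x
    rw [Fintype.sum_sum_type]
    simp only [Sum.elim_inl, Sum.elim_inr, neg_mul]
    rw [Finset.sum_neg_distrib]
    linarith [h x]

lemma faIntegral_eq {S : Type*} {μ : Set S → ℝ} (hμ : IsFAProb μ) (f : S → ℝ) {m : ℕ}
    (c : Fin m → ℝ) (hc : ∀ j, 0 ≤ c j) (Cs : Fin m → Set S)
    (heq : ∀ x, f x = ∑ j, c j * (Cs j).indicator (1 : S → ℝ) x) :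
    faIntegral μ f = ∑ j, c j * μ (Cs j) := by
  have hmem : (∑ j, c j * μ (Cs j)) ∈ {r : ℝ | ∃ (n : ℕ) (a : Fin n → ℝ) (B : Fin n → Set S),
      (∀ i, 0 ≤ a i) ∧ (∀ x, ∑ i, a i * (B i).indicator 1 x ≤ f x) ∧
      r = ∑ i, a i * μ (B i)} := ⟨m, c, Cs, hc, fun x => (heq x).ge, rfl⟩
  have hub : ∀ r ∈ {r : ℝ | ∃ (n : ℕ) (a : Fin n → ℝ) (B : Fin n → Set S),
      (∀ i, 0 ≤ a i) ∧ (∀ x, ∑ i, a i * (B i).indicator 1 x ≤ f x) ∧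
      r = ∑ i, a i * μ (B i)}, r ≤ ∑ j, c j * μ (Cs j) := by
    rintro r ⟨n, a, Bs, ha, hle, rfl⟩
    exact fa_simple_le hμ a Bs c Cs (fun x => (hle x).trans (heq x).le)
  exact le_antisymm (csSup_le ⟨_, hmem⟩ hub) (le_csSup ⟨_, hub⟩ hmem)

lemma fa_fin_sum_ite (N c : ℕ) (hc : c ≤ N) :
    ∑ i : Fin N, (if (i : ℕ) < c then (1 : ℝ) else 0) = c := by
  rw [Fin.sum_univ_eq_sum_range (fun i => if i < c then (1 : ℝ) else 0)]
  rw [← Finset.sum_filter]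
  have : (Finset.range N).filter (fun i => i < c) = Finset.range c := by
    ext i
    simp only [Finset.mem_filter, Finset.mem_range]
    omega
  simp [this]

/-- If `s ∗ χ_A` is bounded, its integral against a left fairly invariant
finitely-additive probability measure equals `∫ χ_A dμ = μ A`. -/
theorem stmt18 {S : Type*} [Semigroup S] (μ : Set S → ℝ)
    (hμ : IsFAProb μ) (hinv : LeftFairlyInv μ) (s : S) (A : Set S)
    (hbdd : ∃ B : ℕ, ∀ x : S, {t | t ∈ A ∧ s * t = x}.encard ≤ (B : ℕ∞)) :
    faIntegral μ (fun x => ({t | t ∈ A ∧ s * t = x}.ncard : ℝ)) = μ A ∧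
    faIntegral μ (A.indicator 1) = μ A := by
  classical
  constructor
  · -- first part
    obtain ⟨Bn, hB⟩ := hbdd
    letI : LinearOrder S := IsWellOrder.linearOrder WellOrderingRel
    set F : S → Set S := fun x => {t | t ∈ A ∧ s * t = x} with hF
    have hFfin : ∀ x, (F x).Finite := fun x =>
      Set.encard_lt_top_iff.1 (lt_of_le_of_lt (hB x) (by simp [lt_top_iff_ne_top]))
    set G : S → Finset S := fun x => (hFfin x).toFinset with hG
    have hcard : ∀ x, (G x).card ≤ Bn := by
      intro x
      have h1 := hB x
      have h2 : (F x).encard = ((G x).card : ℕ∞) := Set.Finite.encard_eq_coe_toFinset_card (hFfin x)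
      rw [show {t | t ∈ A ∧ s * t = x} = F x from rfl, h2, Nat.cast_le] at h1
      exact h1
    have hmemG : ∀ x t, t ∈ G x ↔ (t ∈ A ∧ s * t = x) := by
      intro x t; simp [hG, hF]
    set rank : S → ℕ := fun t => ((G (s * t)).filter (fun u => u < t)).card with hrank
    have rank_lt : ∀ t ∈ A, rank t < (G (s * t)).card := by
      intro t ht
      apply Finset.card_lt_card
      rw [Finset.ssubset_iff_of_subset (Finset.filter_subset _ _)]
      exact ⟨t, (hmemG _ t).2 ⟨ht, rfl⟩, by simp⟩
    have rank_mono : ∀ x, ∀ t ∈ G x, ∀ u ∈ G x, t < u → rank t < rank u := by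
      intro x t ht u hu htu
      have hxt : s * t = x := ((hmemG x t).1 ht).2
      have hxu : s * u = x := ((hmemG x u).1 hu).2
      simp only [hrank, hxt, hxu]
      apply Finset.card_lt_card
      rw [Finset.ssubset_iff_of_subset]
      · exact ⟨t, by simp [Finset.mem_filter, ht, htu], by simp⟩
      · intro v hv
        simp only [Finset.mem_filter] at hv ⊢
        exact ⟨hv.1, hv.2.trans htu⟩
    have rank_inj : ∀ x, ∀ t ∈ G x, ∀ u ∈ G x, rank t = rank u → t = u := by
      intro x t ht u hu hr
      rcases lt_trichotomy t u with h | h | h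
      · exact absurd hr (rank_mono x t ht u hu h).ne
      · exact h
      · exact absurd hr.symm (rank_mono x u hu t ht h).ne
    have rank_surj : ∀ x, ∀ i < (G x).card, ∃ t ∈ G x, rank t = i := by
      intro x i hi
      have himg : (G x).image rank = Finset.range (G x).card := by
        apply Finset.eq_of_subset_of_card_le
        · intro j hj
          simp only [Finset.mem_image] at hj
          obtain ⟨t, ht, rfl⟩ := hj
          have hxt : s * t = x := ((hmemG x t).1 ht).2
          have := rank_lt t ((hmemG x t).1 ht).1
          rw [hxt] at this
          simpa using this
        · rw [Finset.card_range, Finset.card_image_of_injOn (fun t ht u hu => rank_inj x t ht u hu)]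
      have : i ∈ (G x).image rank := by rw [himg]; simpa using hi
      simpa [Finset.mem_image] using this
    -- the partition of A
    set As : Fin Bn → Set S := fun i => {t | t ∈ A ∧ rank t = (i : ℕ)} with hAs
    have hinjAs : ∀ i, Set.InjOn (fun x => s * x) (As i) := by
      intro i t ht u hu hst
      have ht' : t ∈ G (s * t) := (hmemG _ t).2 ⟨ht.1, rfl⟩
      have hu' : u ∈ G (s * t) := (hmemG _ u).2 ⟨hu.1, hst.symm⟩
      exact rank_inj (s * t) t ht' u hu' (ht.2.trans hu.2.symm)
    have hmemImg : ∀ (x : S) (i : Fin Bn),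
        x ∈ (fun t => s * t) '' (As i) ↔ (i : ℕ) < (G x).card := by
      intro x i
      constructor
      · rintro ⟨t, ⟨htA, htr⟩, rfl⟩
        have h := rank_lt t htA
        rw [htr] at h
        exact h
      · intro hi
        obtain ⟨t, ht, hrt⟩ := rank_surj x _ hi
        obtain ⟨htA, hts⟩ := (hmemG x t).1 ht
        exact ⟨t, ⟨htA, hrt⟩, hts⟩
    have key : faIntegral μ (fun x => ({t | t ∈ A ∧ s * t = x}.ncard : ℝ)) =
        ∑ i : Fin Bn, (1 : ℝ) * μ ((fun t => s * t) '' (As i)) := by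
      apply faIntegral_eq hμ _ _ (fun _ => zero_le_one) _
      intro x
      have hncard : {t | t ∈ A ∧ s * t = x}.ncard = (G x).card :=
        Set.ncard_eq_toFinset_card (F x) (hFfin x)
      rw [hncard]
      have : ∀ i : Fin Bn, (1 : ℝ) * ((fun t => s * t) '' (As i)).indicator (1 : S → ℝ) x
          = if (i : ℕ) < (G x).card then 1 else 0 := by
        intro i
        by_cases h : x ∈ (fun t => s * t) '' (As i)
        · simp [Set.indicator_of_mem h, (hmemImg x i).1 h]
        · have : ¬ (i : ℕ) < (G x).card := fun hc => h ((hmemImg x i).2 hc)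
          simp [Set.indicator_of_notMem h, this]
      rw [Finset.sum_congr rfl (fun i _ => this i), fa_fin_sum_ite Bn _ (hcard x)]
    rw [key]
    have hdisjAs : ∀ i ∈ (Finset.univ : Finset (Fin Bn)), ∀ j ∈ Finset.univ, i ≠ j →
        Disjoint (As i) (As j) := by
      intro i _ j _ hij
      rw [Set.disjoint_left]
      rintro t ⟨_, hti⟩ ⟨_, htj⟩
      exact hij (Fin.ext (hti ▸ htj))
    have hunion : (⋃ i ∈ (Finset.univ : Finset (Fin Bn)), As i) = A := by
      ext t
      simp only [Set.mem_iUnion, Finset.mem_univ, exists_prop, true_and, hAs,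
        Set.mem_setOf_eq]
      constructor
      · rintro ⟨i, hi, -⟩
        exact hi
      · intro ht
        have hlt : rank t < Bn := lt_of_lt_of_le (rank_lt t ht) (hcard (s * t))
        exact ⟨⟨rank t, hlt⟩, ht, rfl⟩
    calc ∑ i : Fin Bn, (1 : ℝ) * μ ((fun t => s * t) '' (As i))
        = ∑ i : Fin Bn, μ (As i) := by
          apply Finset.sum_congr rfl
          intro i _
          rw [one_mul, hinv s (As i) (hinjAs i)]
      _ = μ A := by rw [← fa_sum hμ Finset.univ As hdisjAs, hunion]
  · -- second part
    have h1 : faIntegral μ (A.indicator 1) = ∑ _j : Fin 1, (1 : ℝ) * μ A := by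
      apply faIntegral_eq hμ _ _ (fun _ => zero_le_one) (fun _ => A)
      intro x
      simp
    rw [h1]
    simp
end
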